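/- arXiv:1106.1255 — 3 statements merged into one kernel-verified Lean document; each statement's English description precedes it below -/
import Mathlib

section
/- For every graph G, κ(G × K₂) ≤ 2κ(G), where κ denotes the vertex connectivity. -/
open SimpleGraph

universe u v

def SimpleGraph.tensor {V : Type u} {W : Type v} (G : SimpleGraph V) (H : SimpleGraph W) :
    SimpleGraph (V × W) where
  Adj p q := G.Adj p.1 q.1 ∧ H.Adj p.2 q.2
  symm := ⟨fun _ _ h => ⟨h.1.symm, h.2.symm⟩⟩
  loopless := ⟨fun _ h => G.loopless.irrefl _ h.1⟩

def timesK2 {V : Type u} (G : SimpleGraph V) : SimpleGraph (V × Bool) :=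
  G.tensor ⊤

def IsComp {α : Type u} (H : SimpleGraph α) (C : Set α) : Prop :=
  ∃ K : H.ConnectedComponent, C = K.supp

def IsCompOf {V : Type u} (G : SimpleGraph V) (s C : Set V) : Prop :=
  ∃ K : (G.induce s).ConnectedComponent, C = Subtype.val '' K.supp

def IsBPair {V : Type u} (G : SimpleGraph V) (X Y : Set V) : Prop :=
  Disjoint X Y ∧ ((X ∪ Y)ᶜ : Set V).Nonempty ∧
    ∃ C : Set V, IsCompOf G ((X ∪ Y)ᶜ) C ∧ (G.induce C).Colorable 2 ∧
      ∀ x ∈ X, (G.induce (C ∪ {x})).Colorable 2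

noncomputable def bInv {V : Type u} (G : SimpleGraph V) : ℕ :=
  sInf {n | ∃ X Y : Set V, IsBPair G X Y ∧ n = X.ncard + 2 * Y.ncard}

def IsSeparating {V : Type u} (G : SimpleGraph V) (S : Set V) : Prop :=
  ¬ (G.induce Sᶜ).Connected ∨ (Sᶜ : Set V).Subsingleton

noncomputable def kappa {V : Type u} (G : SimpleGraph V) : ℕ :=
  sInf {n | ∃ S : Set V, IsSeparating G S ∧ n = S.ncard}

def starGraph {V : Type u} (G : SimpleGraph V) (S : Set (V × Bool)) : SimpleGraph V where
  Adj u v := u ≠ v ∧ ∃ x y : Bool, (u, x) ∉ S ∧ (v, y) ∉ S ∧ (timesK2 G).Adj (u, x) (v, y)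
  symm := ⟨by
    rintro u v ⟨h, x, y, hx, hy, hadj⟩
    exact ⟨h.symm, y, x, hy, hx, hadj.symm⟩⟩
  loopless := ⟨fun u h => h.1 rfl⟩

/-! If `S` separates `G`, then `S × V(H)` separates `G × H` for every `H`: a connected remainder
of `G × H` projects onto a connected `G - S`, and if `G - S` has at most one vertex, the remainder
of `G × H` spans no edge. For `H = K₂` this separating set has `2|S|` vertices. -/

section Tensor

variable {V : Type u} {W : Type v} (G : SimpleGraph V) (H : SimpleGraph W) (S : Set V)

def tensorInduceFst : (G.tensor H).induce (Prod.fst ⁻¹' Sᶜ) →g G.induce Sᶜ where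
  toFun p := ⟨p.1.1, p.2⟩
  map_rel' h := h.1

theorem SimpleGraph.Connected.of_tensor_induce_preimage_fst
    (h : ((G.tensor H).induce (Prod.fst ⁻¹' Sᶜ)).Connected) : (G.induce Sᶜ).Connected := by
  obtain ⟨⟨⟨_, w⟩, _⟩⟩ := h.nonempty
  exact h.map (tensorInduceFst G H S) fun ⟨x, hx⟩ => ⟨⟨(x, w), hx⟩, rfl⟩

theorem subsingleton_of_tensor_induce_connected (hS : (Sᶜ : Set V).Subsingleton)
    (h : ((G.tensor H).induce (Prod.fst ⁻¹' Sᶜ)).Connected) :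
    (Prod.fst ⁻¹' Sᶜ : Set (V × W)).Subsingleton := by
  intro p hp q hq
  obtain ⟨walk⟩ := h.preconnected ⟨p, hp⟩ ⟨q, hq⟩
  cases walk with
  | nil => rfl
  | @cons _ r _ hadj _ =>
    have hG : G.Adj p.1 r.1.1 := hadj.1
    rw [hS hp r.2] at hG
    exact absurd hG (G.loopless.irrefl _)

theorem IsSeparating.tensor_preimage_fst (hS : IsSeparating G S) :
    IsSeparating (G.tensor H) (Prod.fst ⁻¹' S) := by
  rw [IsSeparating, or_iff_not_imp_left, not_not]
  intro h
  rcases hS with hdisc | hsub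
  · exact absurd (h.of_tensor_induce_preimage_fst G H S) hdisc
  · exact subsingleton_of_tensor_induce_connected G H S hsub h

end Tensor

section Kappa

variable {V : Type u} (G : SimpleGraph V)

theorem kappa_le_ncard {S : Set V} (hS : IsSeparating G S) : kappa G ≤ S.ncard :=
  Nat.sInf_le ⟨S, hS, rfl⟩

theorem exists_isSeparating_ncard_eq_kappa : ∃ S, IsSeparating G S ∧ S.ncard = kappa G := by
  have hne : {n | ∃ S : Set V, IsSeparating G S ∧ n = S.ncard}.Nonempty :=
    ⟨_, Set.univ, Or.inr (by simp), rfl⟩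
  obtain ⟨S, hS, hcard⟩ := Nat.sInf_mem hne
  exact ⟨S, hS, hcard.symm⟩

end Kappa

theorem ncard_preimage_fst_bool {V : Type u} (S : Set V) :
    (Prod.fst ⁻¹' S : Set (V × Bool)).ncard = 2 * S.ncard := by
  rw [← Set.prod_univ, Set.ncard_prod, Set.ncard_univ, Nat.card_eq_fintype_card, Fintype.card_bool,
    mul_comm]

theorem stmt_8_general {V : Type u} (G : SimpleGraph V) :
    kappa (timesK2 G) ≤ 2 * kappa G := by
  obtain ⟨S, hS, hcard⟩ := exists_isSeparating_ncard_eq_kappa G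
  calc kappa (timesK2 G) ≤ (Prod.fst ⁻¹' S : Set (V × Bool)).ncard :=
        kappa_le_ncard _ (hS.tensor_preimage_fst G ⊤ S)
    _ = 2 * kappa G := by rw [ncard_preimage_fst_bool, hcard]

/-- For every graph `G`, `κ(G × K₂) ≤ 2κ(G)`. -/
theorem stmt_8 {V : Type u} [Fintype V] (G : SimpleGraph V) :
    kappa (timesK2 G) ≤ 2 * kappa G :=
  stmt_8_general G
end

section
/- For every graph G admitting a b-pair, κ(G × K₂) ≤ b(G). -/
open SimpleGraph

universe u v

/-!
Let `(X, Y)` be a b-pair whose bipartite component `C` is properly 2-coloured by `c`. As `C`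
is connected, its 2-colouring is unique up to swapping the colours, so bipartiteness of
`G[C ∪ {x}]` forces all neighbours of `x ∈ X` in `C` to share one colour. Hence in `G × K₂`
the vertices `(u, c u)`, `u ∈ C`, are separated from the vertices `(u, ¬c u)` by deleting both
copies of every vertex of `Y` and, for each `x ∈ X`, the single copy of `x` adjacent to the
first family: at most `|X| + 2|Y|` vertices.
-/

namespace SimpleGraph

variable {α V : Type*}

theorem Coloring.eq_iff_eq_of_reachable {H : SimpleGraph α} (c c' : H.Coloring Bool) {u v : α}
    (h : H.Reachable u v) : c u = c v ↔ c' u = c' v := by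
  obtain ⟨p⟩ := h
  rw [Bool.eq_iff_iff (a := c u), Bool.eq_iff_iff (a := c' u), ← c.even_length_iff_congr p,
    c'.even_length_iff_congr p]

theorem not_reachable_of_adj_closed {H : SimpleGraph α} {F : Set α}
    (hF : ∀ ⦃a b⦄, H.Adj a b → a ∈ F → b ∈ F) {a b : α} (ha : a ∈ F) (hb : b ∉ F) :
    ¬H.Reachable a b := by
  rintro ⟨p⟩
  induction p with
  | nil => exact hb ha
  | cons h _ ih => exact ih (hF h ha) hb

theorem Coloring.eq_of_adj_of_colorable_insert {G : SimpleGraph V} {C : Set V}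
    (hC : (G.induce C).Preconnected) (c : (G.induce C).Coloring Bool) {x : V}
    (hx : (G.induce (C ∪ {x})).Colorable 2) {u v : C} (hu : G.Adj x u) (hv : G.Adj x v) :
    c u = c v := by
  obtain ⟨d₀⟩ := hx
  let d := recolorOfEquiv _ finTwoEquiv d₀
  let ι := G.induceHomOfLE (s := C) (s' := C ∪ {x}) Set.subset_union_left
  let x' : ↥(C ∪ {x}) := ⟨x, Or.inr rfl⟩
  have hdu : d (ι u) ≠ d x' := (d.valid (show (G.induce _).Adj x' (ι u) from hu)).symm
  have hdv : d (ι v) ≠ d x' := (d.valid (show (G.induce _).Adj x' (ι v) from hv)).symm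
  refine (c.eq_iff_eq_of_reachable (d.comp ι.toHom) (hC u v)).2 ?_
  exact (Bool.eq_not_iff.2 hdu).trans (Bool.eq_not_iff.2 hdv).symm

end SimpleGraph

namespace IsCompOf

variable {V : Type*} {G : SimpleGraph V} {s C : Set V}

theorem subset (hC : IsCompOf G s C) : C ⊆ s := by
  obtain ⟨K, rfl⟩ := hC
  rintro _ ⟨w, -, rfl⟩
  exact w.2

theorem nonempty (hC : IsCompOf G s C) : C.Nonempty := by
  obtain ⟨K, rfl⟩ := hC
  exact K.nonempty_supp.image _

theorem mem_of_adj (hC : IsCompOf G s C) {u v : V} (hu : u ∈ C) (hv : v ∈ s) (huv : G.Adj u v) :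
    v ∈ C := by
  obtain ⟨K, rfl⟩ := hC
  obtain ⟨u, hu, rfl⟩ := hu
  exact ⟨⟨v, hv⟩, K.mem_supp_of_adj_mem_supp hu huv, rfl⟩

theorem preconnected_induce (hC : IsCompOf G s C) : (G.induce C).Preconnected := by
  obtain ⟨K, rfl⟩ := hC
  let f : K.toSimpleGraph →g G.induce (Subtype.val '' K.supp) :=
    { toFun := fun u => ⟨u.1.1, u.1, u.2, rfl⟩, map_rel' := id }
  refine K.connected_toSimpleGraph.preconnected.map f ?_
  rintro ⟨_, w, hw, rfl⟩
  exact ⟨⟨w, hw⟩, rfl⟩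

end IsCompOf

section BPairCut

variable {V : Type*} {G : SimpleGraph V} {C : Set V}

def bPairCut (X Y : Set V) (c : (G.induce C).Coloring Bool) : Set (V × Bool) :=
  Y ×ˢ Set.univ ∪ {p | p.1 ∈ X ∧ ∃ u : C, G.Adj p.1 u ∧ c u ≠ p.2}

variable {X Y : Set V} (c : (G.induce C).Coloring Bool)

theorem notMem_bPairCut {u : V} (hu : u ∉ X ∪ Y) (β : Bool) : (u, β) ∉ bPairCut X Y c := by
  rintro (⟨hY, -⟩ | ⟨hX, -⟩)
  exacts [hu (Or.inr hY), hu (Or.inl hX)]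

theorem ncard_bPairCut_le (hX : X.Finite) (hC : (G.induce C).Preconnected)
    (hXC : ∀ x ∈ X, (G.induce (C ∪ {x})).Colorable 2) :
    (bPairCut X Y c).ncard ≤ X.ncard + 2 * Y.ncard := by
  have hY : (Y ×ˢ (Set.univ : Set Bool)).ncard = 2 * Y.ncard := by
    rw [Set.ncard_prod, Set.ncard_univ, Nat.card_eq_fintype_card, Fintype.card_bool, mul_comm]
  have hXpart :
      {p : V × Bool | p.1 ∈ X ∧ ∃ u : C, G.Adj p.1 u ∧ c u ≠ p.2}.ncard ≤ X.ncard := by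
    refine Set.ncard_le_ncard_of_injOn Prod.fst (fun p hp => hp.1) ?_ hX
    rintro ⟨x, β⟩ ⟨hx, u, hxu, hβ : c u ≠ β⟩ ⟨x', β'⟩ ⟨-, u', hxu', hβ' : c u' ≠ β'⟩
      (rfl : x = x')
    have huu' : c u = c u' := c.eq_of_adj_of_colorable_insert hC (hXC x hx) hxu hxu'
    rw [← Bool.not_eq_iff.2 hβ, ← Bool.not_eq_iff.2 hβ', huu']
  calc (bPairCut X Y c).ncard ≤ _ + _ := Set.ncard_union_le _ _
    _ ≤ X.ncard + 2 * Y.ncard := by omega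

theorem isSeparating_bPairCut (hC : IsCompOf G (X ∪ Y)ᶜ C) :
    IsSeparating (timesK2 G) (bPairCut X Y c) := by
  set S := bPairCut X Y c
  let F : Set ↥Sᶜ := {p | ∃ u : C, p.1 = (u.1, c u)}
  have hF : ∀ ⦃p q⦄, ((timesK2 G).induce Sᶜ).Adj p q → p ∈ F → q ∈ F := by
    rintro ⟨⟨a, α⟩, _⟩ ⟨⟨b, β⟩, hq⟩ ⟨hab, hαβ⟩ ⟨u, hu⟩
    obtain ⟨rfl, rfl⟩ := Prod.mk.inj hu
    have hb : b ∉ X ∪ Y := by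
      rintro (hbX | hbY)
      · exact hq (Or.inr ⟨hbX, u, hab.symm, hαβ⟩)
      · exact hq (Or.inl ⟨hbY, trivial⟩)
    have hbC : b ∈ C := hC.mem_of_adj u.2 hb hab
    have hcb : c ⟨b, hbC⟩ ≠ c u := c.valid hab.symm
    exact ⟨⟨b, hbC⟩,
      Prod.ext rfl ((Bool.eq_not_iff.2 hαβ.symm).trans (Bool.eq_not_iff.2 hcb).symm)⟩
  obtain ⟨u, huC⟩ := hC.nonempty
  have hu : u ∉ X ∪ Y := hC.subset huC
  let p₀ : ↥Sᶜ := ⟨(u, c ⟨u, huC⟩), notMem_bPairCut c hu _⟩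
  let p₁ : ↥Sᶜ := ⟨(u, !c ⟨u, huC⟩), notMem_bPairCut c hu _⟩
  have hp₁ : p₁ ∉ F := by
    rintro ⟨w, hw⟩
    obtain ⟨rfl, hcw⟩ := Prod.mk.inj hw
    exact Bool.not_ne_self _ (hcw.trans (congrArg c (Subtype.ext rfl)))
  exact Or.inl fun hconn =>
    not_reachable_of_adj_closed hF ⟨⟨u, huC⟩, rfl⟩ hp₁ (hconn.preconnected p₀ p₁)

end BPairCut

theorem kappa_timesK2_le_of_isBPair {V : Type*} {G : SimpleGraph V} {X Y : Set V}
    (hXY : IsBPair G X Y) (hX : X.Finite) : kappa (timesK2 G) ≤ X.ncard + 2 * Y.ncard := by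
  obtain ⟨-, -, C, hC, ⟨c₀⟩, hXC⟩ := hXY
  let c := recolorOfEquiv _ finTwoEquiv c₀
  calc kappa (timesK2 G) ≤ (bPairCut X Y c).ncard :=
        Nat.sInf_le ⟨_, isSeparating_bPairCut c hC, rfl⟩
    _ ≤ X.ncard + 2 * Y.ncard := ncard_bPairCut_le c hX hC.preconnected_induce hXC

/-- For every graph `G` admitting a b-pair, `κ(G × K₂) ≤ b(G)`. -/
theorem stmt_9 {V : Type u} [Fintype V] (G : SimpleGraph V)
    (h : ∃ X Y : Set V, IsBPair G X Y) :
    kappa (timesK2 G) ≤ bInv G := by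
  obtain ⟨X, Y, hXY⟩ := h
  obtain ⟨X, Y, hXY, hb⟩ :
      bInv G ∈ {n | ∃ X Y : Set V, IsBPair G X Y ∧ n = X.ncard + 2 * Y.ncard} :=
    Nat.sInf_mem ⟨_, X, Y, hXY, rfl⟩
  exact hb ▸ kappa_timesK2_le_of_isBPair hXY X.toFinite
end

section
/- Let G be connected non-bipartite, and let S ⊆ V(G × K₂) satisfy |S| < min{2κ(G), b(G)} and S'_u := ({u} × {a,b}) − S ≠ ∅ for every u ∈ V(G). Define the graph G* on the classes S'_u (u ∈ V(G)), with S'_u and S'_v adjacent iff G × K₂ − S contains an edge with one end in S'_u and the other in S'_v. Then G* is connected. -/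
open SimpleGraph

universe u v

/-
Write `U` for the set of vertices `u` of `G` with `S ∩ ({u} × {a,b}) ≠ ∅`; since every class `S'_u`
is nonempty, `|U| = |S|`. If an edge `uv` of `G` yields no edge of `G*`, then both `u` and `v`
lie in `U`. Suppose `G*` is disconnected.
If some component of `G*` lies inside `U`, pick a vertex `v` in it: all its `G`-neighbours lie in
`U - {v}`, so `v` is an isolated vertex of `G - (U - {v})` and `(U - {v}, ∅)` is a b-pair, giving
`b(G) < |U|`.
Otherwise two components `A`, `B` of `G*` contain vertices `a ∉ U`, `b ∉ U`. Every `G`-edge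
leaving `A` starts in `A ∩ U`, so `A ∩ U` separates `a` from `b` in `G`, and likewise `B ∩ U`;
these separators are disjoint, giving `2κ(G) ≤ |U|`.
-/

theorem SimpleGraph.Reachable.mem_of_forall_adj_mem {α : Type*} {H : SimpleGraph α} {s : Set α}
    (hs : ∀ ⦃p q⦄, H.Adj p q → p ∈ s → q ∈ s) {p q : α} (h : H.Reachable p q) (hp : p ∈ s) :
    q ∈ s := by
  obtain ⟨w⟩ := h
  induction w with
  | nil => exact hp
  | cons hadj _ ih => exact ih (hs hadj hp)

theorem Set.injOn_fst_of_forall_exists_notMem {α : Type*} {S : Set (α × Bool)}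
    (hS : ∀ a, ∃ x, (a, x) ∉ S) : Set.InjOn Prod.fst S := by
  rintro ⟨a, x⟩ hx ⟨b, y⟩ hy (rfl : a = b)
  obtain ⟨z, hz⟩ := hS a
  have hxy : x = y := by
    cases x <;> cases y <;> cases z <;> simp_all
  rw [hxy]

theorem SimpleGraph.colorable_two_induce_pair {V : Type*} (G : SimpleGraph V) (v x : V) :
    (G.induce ({v} ∪ {x})).Colorable 2 := by
  classical
  refine ⟨Coloring.mk (fun z => if z.val = v then 0 else 1) fun {p q} hpq heq => hpq.ne ?_⟩
  obtain ⟨p, hp | hp⟩ := p <;> obtain ⟨q, hq | hq⟩ := q <;>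
    simp only [Set.mem_singleton_iff] at hp hq <;> subst hp hq <;> simp_all

section

variable {V : Type u} {G : SimpleGraph V}

theorem kappa_le_ncard_s12 {X : Set V} (h : ¬ (G.induce Xᶜ).Connected) : kappa G ≤ X.ncard :=
  Nat.sInf_le ⟨X, Or.inl h, rfl⟩

theorem bInv_le_ncard {X Y : Set V} (h : IsBPair G X Y) : bInv G ≤ X.ncard + 2 * Y.ncard :=
  Nat.sInf_le ⟨X, Y, h, rfl⟩

theorem isCompOf_compl_singleton {X : Set V} {v : V} (hv : v ∉ X) (hX : G.neighborSet v ⊆ X) :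
    IsCompOf G Xᶜ {v} := by
  refine ⟨(G.induce Xᶜ).connectedComponentMk ⟨v, hv⟩, ?_⟩
  have hclosed : ∀ ⦃p q : ↥Xᶜ⦄, (G.induce Xᶜ).Adj p q → p ∈ ({⟨v, hv⟩} : Set ↥Xᶜ) →
      q ∈ ({⟨v, hv⟩} : Set ↥Xᶜ) := by
    rintro p q hpq rfl
    exact absurd (hX hpq) q.2
  ext z
  constructor
  · rintro rfl
    exact ⟨⟨_, hv⟩, rfl, rfl⟩
  · rintro ⟨z, hz, rfl⟩
    have : z = ⟨v, hv⟩ := (ConnectedComponent.exact hz).symm.mem_of_forall_adj_mem hclosed rfl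
    simp [this]

theorem isBPair_of_neighborSet_subset {X : Set V} {v : V} (hv : v ∉ X)
    (hX : G.neighborSet v ⊆ X) : IsBPair G X ∅ := by
  refine ⟨Set.disjoint_empty X, ⟨v, by simpa using hv⟩, {v}, by
    simpa using isCompOf_compl_singleton hv hX, ?_, fun x _ => G.colorable_two_induce_pair v x⟩
  exact Set.union_self {v} ▸ G.colorable_two_induce_pair v v

end

namespace starGraph

variable {V : Type u} {G : SimpleGraph V} {S : Set (V × Bool)}

theorem adj_of_notMem_image_fst {u v : V} (huv : G.Adj u v) (hu : u ∉ Prod.fst '' S)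
    (hv : ∃ y, (v, y) ∉ S) : (starGraph G S).Adj u v := by
  obtain ⟨y, hy⟩ := hv
  exact ⟨huv.ne, !y, y, fun h => hu ⟨_, h, rfl⟩, hy, huv, by simp⟩

theorem mem_image_fst_of_not_adj (hne : ∀ u, ∃ x, (u, x) ∉ S) {u v : V} (huv : G.Adj u v)
    (h : ¬ (starGraph G S).Adj u v) : u ∈ Prod.fst '' S :=
  by_contra fun hu => h (adj_of_notMem_image_fst huv hu (hne v))

theorem kappa_le_ncard_reachable_inter (hne : ∀ u, ∃ x, (u, x) ∉ S) {c d : V}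
    (hc : c ∉ Prod.fst '' S) (hd : d ∉ Prod.fst '' S) (hcd : ¬ (starGraph G S).Reachable c d) :
    kappa G ≤ ({w | (starGraph G S).Reachable c w} ∩ Prod.fst '' S).ncard := by
  set X := {w | (starGraph G S).Reachable c w} ∩ Prod.fst '' S
  refine kappa_le_ncard_s12 fun hconn => hcd ?_
  let s : Set ↥Xᶜ := {p | (starGraph G S).Reachable c p}
  have hclosed : ∀ ⦃p q : ↥Xᶜ⦄, (G.induce Xᶜ).Adj p q → p ∈ s → q ∈ s := by
    intro p q hpq hp
    by_cases hstar : (starGraph G S).Adj p q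
    · exact hp.trans hstar.reachable
    · exact absurd ⟨hp, mem_image_fst_of_not_adj hne hpq hstar⟩ p.2
  exact (hconn.preconnected ⟨c, fun h => hc h.2⟩ ⟨d, fun h => hd h.2⟩).mem_of_forall_adj_mem
    hclosed (Reachable.refl c)

theorem two_mul_kappa_le_ncard [Finite V] (hne : ∀ u, ∃ x, (u, x) ∉ S) {c d : V}
    (hc : c ∉ Prod.fst '' S) (hd : d ∉ Prod.fst '' S) (hcd : ¬ (starGraph G S).Reachable c d) :
    2 * kappa G ≤ (Prod.fst '' S).ncard := by
  have hdisj : Disjoint ({w | (starGraph G S).Reachable c w} ∩ Prod.fst '' S)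
      ({w | (starGraph G S).Reachable d w} ∩ Prod.fst '' S) :=
    Set.disjoint_left.2 fun w hcw hdw => hcd (hcw.1.trans hdw.1.symm)
  calc 2 * kappa G
      ≤ ({w | (starGraph G S).Reachable c w} ∩ Prod.fst '' S).ncard
        + ({w | (starGraph G S).Reachable d w} ∩ Prod.fst '' S).ncard := by
        have := kappa_le_ncard_reachable_inter hne hc hd hcd
        have := kappa_le_ncard_reachable_inter hne hd hc fun h => hcd h.symm
        omega
    _ = (({w | (starGraph G S).Reachable c w} ∪ {w | (starGraph G S).Reachable d w})
          ∩ Prod.fst '' S).ncard := by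
        rw [Set.union_inter_distrib_right, Set.ncard_union_eq hdisj]
    _ ≤ (Prod.fst '' S).ncard := Set.ncard_le_ncard Set.inter_subset_right

theorem bInv_lt_ncard [Finite V] (hne : ∀ u, ∃ x, (u, x) ∉ S) {v : V}
    (hv : ∀ w, (starGraph G S).Reachable v w → w ∈ Prod.fst '' S) :
    bInv G < (Prod.fst '' S).ncard := by
  have hvU : v ∈ Prod.fst '' S := hv v Reachable.rfl
  have hnbr : G.neighborSet v ⊆ Prod.fst '' S \ {v} := by
    intro w hw
    refine ⟨?_, (G.ne_of_adj hw).symm⟩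
    by_cases hstar : (starGraph G S).Adj v w
    · exact hv w hstar.reachable
    · exact mem_image_fst_of_not_adj hne hw.symm fun h => hstar h.symm
  have hb := bInv_le_ncard (isBPair_of_neighborSet_subset (fun h => h.2 rfl) hnbr)
  rw [Set.ncard_sdiff_singleton_of_mem hvU] at hb
  have := (Set.ncard_pos (Set.toFinite _)).2 ⟨v, hvU⟩
  simp only [Set.ncard_empty] at hb
  omega

end starGraph

theorem stmt_12_general {V : Type u} [Fintype V] (G : SimpleGraph V)
    (hconn : G.Connected) (S : Set (V × Bool))
    (hsize : S.ncard < min (2 * kappa G) (bInv G))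
    (hne : ∀ u : V, ∃ x : Bool, (u, x) ∉ S) :
    (starGraph G S).Connected := by
  have hU : (Prod.fst '' S).ncard = S.ncard :=
    (Set.injOn_fst_of_forall_exists_notMem hne).ncard_image
  by_contra hnc
  by_cases hinside : ∃ v, ∀ w, (starGraph G S).Reachable v w → w ∈ Prod.fst '' S
  · obtain ⟨v, hv⟩ := hinside
    have := starGraph.bInv_lt_ncard hne hv
    omega
  · push Not at hinside
    obtain ⟨a, b, hab⟩ : ∃ a b, ¬ (starGraph G S).Reachable a b := by
      simpa [connected_iff, Preconnected, hconn.nonempty] using hnc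
    obtain ⟨a', haa', ha'⟩ := hinside a
    obtain ⟨b', hbb', hb'⟩ := hinside b
    have := starGraph.two_mul_kappa_le_ncard hne ha' hb' fun h =>
      hab (haa'.trans (h.trans hbb'.symm))
    omega

/-- If `G` is connected and non-bipartite, `|S| < min{2κ(G), b(G)}` and every class
`S'_u = ({u} × {a,b}) − S` is nonempty, then the graph `G*` on these classes is connected. -/
theorem stmt_12 {V : Type u} [Fintype V] (G : SimpleGraph V)
    (hconn : G.Connected) (hnbip : ¬ G.Colorable 2) (S : Set (V × Bool))
    (hsize : S.ncard < min (2 * kappa G) (bInv G))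
    (hne : ∀ u : V, ∃ x : Bool, (u, x) ∉ S) :
    (starGraph G S).Connected :=
  stmt_12_general G hconn S hsize hne
end
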